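/- arXiv:2202.09621 — 2 statements merged into one kernel-verified Lean document; each statement's English description precedes it below -/
import Mathlib

section
/- Let σ be a fixed-point-free permutation of Fin n and let G_σ be the bipartite graph with a_i adjacent to b_j iff j = i or j = σ(i). If i lies in a cycle of σ of length k, then the connected component of a_i in G_σ has exactly 2k vertices, namely {a_{σ^m(i)} : 0 ≤ m < k} ∪ {b_{σ^m(i)} : 0 ≤ m < k}. -/
/-!
Every edge of `G_σ` joins vertices whose indices lie in the same cycle of `σ`, and conversely
`a_i`, `b_{σ i}`, `a_{σ i}` form a path, so the component of `a_i` consists of the `a_j` and `b_j`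
with `j` in the cycle of `i`. Since `σ^k i = i`, that cycle is `{σ^m i : m < k}`, and the
minimality of `k` makes these `k` points distinct.
-/

/-- The bipartite graph `G_σ` on `Fin n ⊕ Fin n`:
`a_i = Sum.inl i` is adjacent to `b_j = Sum.inr j` iff `j = i` or `j = σ i`. -/
def Gsigma (n : ℕ) (σ : Equiv.Perm (Fin n)) : SimpleGraph (Fin n ⊕ Fin n) where
  Adj v w :=
    match v, w with
    | Sum.inl i, Sum.inr j => j = i ∨ j = σ i
    | Sum.inr j, Sum.inl i => j = i ∨ j = σ i
    | _, _ => False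
  symm := by
    constructor
    intro v w h
    cases v <;> cases w <;> simp_all
  loopless := by
    constructor
    intro v h
    cases v <;> simp_all

theorem Set.ncard_image_inl_union_image_inr {α : Type*} [Finite α] (s : Set α) :
    (Sum.inl '' s ∪ Sum.inr '' s : Set (α ⊕ α)).ncard = 2 * s.ncard := by
  have hdisj : Disjoint (Sum.inl '' s : Set (α ⊕ α)) (Sum.inr '' s) :=
    Set.isCompl_range_inl_range_inr.disjoint.mono (Set.image_subset_range _ _)
      (Set.image_subset_range _ _)
  rw [Set.ncard_union_eq hdisj, Set.ncard_image_of_injective _ Sum.inl_injective,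
    Set.ncard_image_of_injective _ Sum.inr_injective, two_mul]

namespace Equiv.Perm

variable {α : Type*} {σ : Perm α} {x : α} {k : ℕ}

theorem zpow_apply_eq_pow_toNat_emod (hk : 0 < k) (hkx : (σ ^ k) x = x) (z : ℤ) :
    (σ ^ z) x = (σ ^ (z % k).toNat) x := by
  have hmod : ((z % k).toNat : ℤ) = z % k := Int.toNat_of_nonneg (Int.emod_nonneg _ (by omega))
  calc (σ ^ z) x = (σ ^ (z % k + k * (z / k))) x := by rw [Int.emod_add_mul_ediv]
    _ = (σ ^ (z % k)) (((σ ^ k) ^ (z / k)) x) := by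
      rw [zpow_add, zpow_mul, zpow_natCast, mul_apply]
    _ = (σ ^ (z % k).toNat) x := by
      rw [zpow_apply_eq_self_of_apply_eq_self hkx, ← zpow_natCast, hmod]

theorem setOf_sameCycle_eq_image_pow (hk : 0 < k) (hkx : (σ ^ k) x = x) :
    {y | σ.SameCycle x y} = (fun m : ℕ => (σ ^ m) x) '' Set.Iio k := by
  ext y
  constructor
  · rintro ⟨z, rfl⟩
    refine ⟨(z % k).toNat, ?_, (zpow_apply_eq_pow_toNat_emod hk hkx z).symm⟩
    have := Int.emod_lt_of_pos z (Int.natCast_pos.mpr hk)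
    simp only [Set.mem_Iio]
    omega
  · rintro ⟨m, -, rfl⟩
    exact ⟨m, by rw [zpow_natCast]⟩

theorem injOn_pow_apply_Iio (hmin : ∀ m, 0 < m → m < k → (σ ^ m) x ≠ x) :
    Set.InjOn (fun m : ℕ => (σ ^ m) x) (Set.Iio k) := by
  intro a ha b hb h
  wlog hab : a ≤ b generalizing a b
  · exact (this hb ha h.symm (le_of_not_ge hab)).symm
  by_contra hne
  refine hmin (b - a) (by omega) ((Nat.sub_le b a).trans_lt hb) ((σ ^ a).injective ?_)
  rw [← mul_apply, ← pow_add, Nat.add_sub_cancel' hab]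
  exact h.symm

end Equiv.Perm

namespace Gsigma

open Equiv Perm

variable {n : ℕ} {σ : Perm (Fin n)}

theorem sameCycle_of_adj {v w : Fin n ⊕ Fin n} (h : (Gsigma n σ).Adj v w) :
    σ.SameCycle (Sum.elim id id v) (Sum.elim id id w) := by
  rcases v with i | j <;> rcases w with i' | j' <;> simp only [Gsigma] at h
  · rcases h with rfl | rfl
    exacts [SameCycle.rfl, sameCycle_apply_right.mpr SameCycle.rfl]
  · rcases h with rfl | rfl
    exacts [SameCycle.rfl, sameCycle_apply_left.mpr SameCycle.rfl]

theorem sameCycle_of_reachable {v w : Fin n ⊕ Fin n} (h : (Gsigma n σ).Reachable v w) :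
    σ.SameCycle (Sum.elim id id v) (Sum.elim id id w) := by
  obtain ⟨p⟩ := h
  induction p with
  | nil => exact SameCycle.rfl
  | cons hadj _ ih => exact (sameCycle_of_adj hadj).trans ih

theorem reachable_inl_inr_self (i : Fin n) : (Gsigma n σ).Reachable (.inl i) (.inr i) :=
  SimpleGraph.Adj.reachable (Or.inl rfl)

theorem reachable_inl_apply (i : Fin n) : (Gsigma n σ).Reachable (.inl i) (.inl (σ i)) :=
  (SimpleGraph.Adj.reachable (Or.inr rfl)).trans (reachable_inl_inr_self (σ i)).symm

theorem reachable_inl_pow_apply (i : Fin n) :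
    ∀ m : ℕ, (Gsigma n σ).Reachable (.inl i) (.inl ((σ ^ m) i))
  | 0 => .rfl
  | m + 1 => by
    rw [pow_succ', mul_apply]
    exact (reachable_inl_pow_apply i m).trans (reachable_inl_apply _)

theorem reachable_inl_of_sameCycle {i j : Fin n} (h : σ.SameCycle i j) :
    (Gsigma n σ).Reachable (.inl i) (.inl j) := by
  obtain ⟨m, -, rfl⟩ := h.exists_nat_pow_eq
  exact reachable_inl_pow_apply i m

theorem reachable_inl_iff {i : Fin n} {v : Fin n ⊕ Fin n} :
    (Gsigma n σ).Reachable (.inl i) v ↔ σ.SameCycle i (Sum.elim id id v) := by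
  refine ⟨sameCycle_of_reachable, fun h => ?_⟩
  rcases v with j | j
  · exact reachable_inl_of_sameCycle h
  · exact (reachable_inl_of_sameCycle h).trans (reachable_inl_inr_self j)

theorem supp_connectedComponentMk_inl (i : Fin n) :
    ((Gsigma n σ).connectedComponentMk (.inl i)).supp =
      Sum.inl '' {j | σ.SameCycle i j} ∪ Sum.inr '' {j | σ.SameCycle i j} := by
  ext v
  rw [SimpleGraph.ConnectedComponent.mem_supp_iff, SimpleGraph.ConnectedComponent.eq,
    SimpleGraph.reachable_comm, reachable_inl_iff]
  rcases v with j | j <;> simp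

end Gsigma

theorem Gsigma_component_of_cycle_general (n : ℕ) (σ : Equiv.Perm (Fin n))
    (i : Fin n) (k : ℕ) (hk : 0 < k)
    (hki : (σ ^ k) i = i) (hmin : ∀ m, 0 < m → m < k → (σ ^ m) i ≠ i) :
    ((Gsigma n σ).connectedComponentMk (Sum.inl i)).supp =
      (fun m : ℕ => (Sum.inl ((σ ^ m) i) : Fin n ⊕ Fin n)) '' (Set.Iio k) ∪
      (fun m : ℕ => (Sum.inr ((σ ^ m) i) : Fin n ⊕ Fin n)) '' (Set.Iio k) ∧
    (((Gsigma n σ).connectedComponentMk (Sum.inl i)).supp).ncard = 2 * k := by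
  rw [Gsigma.supp_connectedComponentMk_inl, Equiv.Perm.setOf_sameCycle_eq_image_pow hk hki,
    Set.image_image, Set.image_image]
  refine ⟨rfl, ?_⟩
  rw [← Set.image_image Sum.inl, ← Set.image_image Sum.inr, Set.ncard_image_inl_union_image_inr,
    (Equiv.Perm.injOn_pow_apply_Iio hmin).ncard_image, Set.ncard_Iio_nat]

theorem Gsigma_component_of_cycle (n : ℕ) (σ : Equiv.Perm (Fin n))
    (hσ : ∀ i, σ i ≠ i) (i : Fin n) (k : ℕ) (hk : 0 < k)
    (hki : (σ ^ k) i = i) (hmin : ∀ m, 0 < m → m < k → (σ ^ m) i ≠ i) :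
    ((Gsigma n σ).connectedComponentMk (Sum.inl i)).supp =
      (fun m : ℕ => (Sum.inl ((σ ^ m) i) : Fin n ⊕ Fin n)) '' (Set.Iio k) ∪
      (fun m : ℕ => (Sum.inr ((σ ^ m) i) : Fin n ⊕ Fin n)) '' (Set.Iio k) ∧
    (((Gsigma n σ).connectedComponentMk (Sum.inl i)).supp).ncard = 2 * k :=
  Gsigma_component_of_cycle_general n σ i k hk hki hmin
end

section
/- Let F be a finite field, let φ : Z/mZ → F^× be an injective group homomorphism (written multiplicatively), and define points in P²(F) by ψ(a_i) = [φ(i) : 0 : 1], ψ(b_i) = [0 : −φ(i) : 1] for i ∈ Z/mZ, ψ(c₀) = [1 : φ(0) : 0], ψ(c₁) = [1 : φ(1) : 0]. Then for all i, j ∈ Z/mZ and k ∈ {0, 1}, the points ψ(a_i), ψ(b_j), ψ(c_k) are collinear if and only if j = i + k. -/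
/-- Collinearity in `P²(F)` of three points given by homogeneous coordinates:
there is a nonzero line `⟨a, b, c⟩` containing all three. -/
def CollinearPts (F : Type*) [Field F] (P Q R : Fin 3 → F) : Prop :=
  ∃ a b c : F, ¬ (a = 0 ∧ b = 0 ∧ c = 0) ∧
    a * P 0 + b * P 1 + c * P 2 = 0 ∧
    a * Q 0 + b * Q 1 + c * Q 2 = 0 ∧
    a * R 0 + b * R 1 + c * R 2 = 0

theorem psi_collinear_iff_units (F : Type*) [Field F] [Fintype F] (m : ℕ)
    (φ : Multiplicative (ZMod m) →* Fˣ) (hφ : Function.Injective φ)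
    (i j k : ZMod m) (hk : k = 0 ∨ k = 1) :
    CollinearPts F
      ![(φ (Multiplicative.ofAdd i) : F), 0, 1]
      ![0, -(φ (Multiplicative.ofAdd j) : F), 1]
      ![1, (φ (Multiplicative.ofAdd k) : F), 0] ↔ j = i + k := by
  set x : F := (φ (Multiplicative.ofAdd i) : F) with hx
  set y : F := (φ (Multiplicative.ofAdd j) : F) with hy
  set z : F := (φ (Multiplicative.ofAdd k) : F) with hz
  have key : y = x * z ↔ j = i + k := by
    constructor
    · intro h
      have : (φ (Multiplicative.ofAdd j) : F) =
          (φ (Multiplicative.ofAdd i) * φ (Multiplicative.ofAdd k) : Fˣ) := by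
        push_cast; exact h
      have h2 : φ (Multiplicative.ofAdd j) =
          φ (Multiplicative.ofAdd i) * φ (Multiplicative.ofAdd k) := Units.ext this
      rw [← map_mul] at h2
      have := hφ h2
      have : j = i + k := by
        have := congrArg Multiplicative.toAdd this
        simpa using this
      exact this
    · intro h
      subst h
      have : Multiplicative.ofAdd (i + k) =
          Multiplicative.ofAdd i * Multiplicative.ofAdd k := rfl
      rw [hy, hx, hz, this, map_mul]
      push_cast; ring
  rw [← key]
  constructor
  · rintro ⟨a, b, c, hne, h1, h2, h3⟩
    simp only [Matrix.cons_val_zero, Matrix.cons_val_one, Matrix.head_cons,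
      Matrix.cons_val_two, Matrix.tail_cons, mul_zero, mul_one, add_zero,
      zero_add, mul_neg] at h1 h2 h3
    -- h1 : a * x + c = 0, h2 : -(b*y) + c = 0, h3 : a + b*z = 0
    have hb : b ≠ 0 := by
      intro hb0
      apply hne
      subst hb0
      have ha : a = 0 := by linear_combination h3
      refine ⟨ha, rfl, ?_⟩
      subst ha; linear_combination h1
    have : b * y = b * (x * z) := by
      linear_combination h1 - h2 - x * h3
    exact mul_left_cancel₀ hb this
  · intro h
    refine ⟨-z, 1, y, ?_, ?_, ?_, ?_⟩
    · rintro ⟨-, h1, -⟩; exact one_ne_zero h1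
    · simp [h]; ring
    · simp
    · simp
end
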